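/- arXiv:2603.05245 — 2 statements merged into one kernel-verified Lean document; each statement's English description precedes it below -/
import Mathlib

section
/- Let u : ℝⁿ → ℝⁿ be a smooth map vanishing on ∂Ω. Then −∫_Ω ⟨u, T(T(∇η), ∇u)⟩ dm = ½ ∫_Ω |u|² div_η( T(T(∇η)) ) dm. -/
open MeasureTheory Real
open scoped RealInnerProductSpace BigOperators

noncomputable section

abbrev En (n : ℕ) := EuclideanSpace ℝ (Fin n)

/-- Divergence of a vector field on Euclidean space: trace of the derivative. -/
def vdiv {n : ℕ} (X : En n → En n) (x : En n) : ℝ :=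
  ∑ i, fderiv ℝ X x (EuclideanSpace.single i 1) i

/-- Weighted divergence `div_η X = div X − ⟨∇η, X⟩`. -/
def vdivEta {n : ℕ} (η : En n → ℝ) (X : En n → En n) (x : En n) : ℝ :=
  vdiv X x - ⟪gradient η x, X x⟫

/-- The operator `𝓛 f = div_η (T (∇ f))`. -/
def Lop {n : ℕ} (T : En n → (En n →L[ℝ] En n)) (η : En n → ℝ) (f : En n → ℝ) (x : En n) : ℝ :=
  vdivEta η (fun y => T y (gradient f y)) x

/-- The vector field `tr(∇T)(x) = ∑ i (D_{e i} T)(x)(e i)`. -/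
def trGradT {n : ℕ} (T : En n → (En n →L[ℝ] En n)) (x : En n) : En n :=
  ∑ i, fderiv ℝ T x (EuclideanSpace.single i 1) (EuclideanSpace.single i 1)

/-- Lebesgue measure on `Ω`, weighted with density `e^{-η}`. -/
def wMeasure {n : ℕ} (η : En n → ℝ) (Ω : Set (En n)) : Measure (En n) :=
  (volume.restrict Ω).withDensity fun x => ENNReal.ofReal (Real.exp (-η x))

section Aux
open Set Asymptotics
open scoped Classical ENNReal NNReal

lemma div_pi_zero {m : ℕ} (Ω : Set (Fin (m+1) → ℝ)) (hO : IsOpen Ω)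
    (hb : Bornology.IsBounded Ω) (V : (Fin (m+1) → ℝ) → (Fin (m+1) → ℝ))
    (hV : ContDiff ℝ (⊤ : ℕ∞) V)
    (h0 : ∀ x ∈ frontier Ω, V x = 0)
    (h1 : ∀ x ∈ frontier Ω, fderiv ℝ V x = 0) :
    ∫ x in Ω, ∑ i, fderiv ℝ V x (Pi.single i 1) i = 0 := by
  obtain ⟨R, hR0, hRsub⟩ : ∃ R > 0, closure Ω ⊆ Metric.ball (0 : Fin (m+1) → ℝ) R := by
    obtain ⟨R, hR, h⟩ := hb.closure.subset_ball_lt 0 0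
    exact ⟨R, hR, h⟩
  set a : Fin (m+1) → ℝ := fun _ => -R
  set b : Fin (m+1) → ℝ := fun _ => R
  have hsubI : ∀ x ∈ closure Ω, ∀ i, x i ∈ Ioo (-R) R := by
    intro x hx i
    have := hRsub hx
    rw [Metric.mem_ball, dist_zero_right] at this
    have hi := norm_le_pi_norm x i
    simp only [Real.norm_eq_abs] at hi ⊢
    have habs : |x i| < R := lt_of_le_of_lt hi this
    rw [abs_lt] at habs
    exact ⟨habs.1, habs.2⟩
  have hdiff : Differentiable ℝ V := hV.differentiable (by simp)
  set W : (Fin (m+1) → ℝ) → (Fin (m+1) → ℝ) := Ω.indicator V with hWdef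
  set W' : (Fin (m+1) → ℝ) → ((Fin (m+1) → ℝ) →L[ℝ] (Fin (m+1) → ℝ)) :=
    fun x => if x ∈ Ω then fderiv ℝ V x else 0 with hW'def
  have hfr : ∀ x, x ∈ closure Ω → x ∉ Ω → x ∈ frontier Ω := by
    intro x hc hn
    rw [frontier, hO.interior_eq]
    exact ⟨hc, hn⟩
  have hW : ∀ x, HasFDerivAt W (W' x) x := by
    intro x
    by_cases hx : x ∈ Ω
    · have hW'e : W' x = fderiv ℝ V x := by simp only [hW'def, if_pos hx]
      rw [hW'e]
      refine (hdiff x).hasFDerivAt.congr_of_eventuallyEq ?_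
      filter_upwards [hO.mem_nhds hx] with y hy
      exact Set.indicator_of_mem hy V
    · have hW'0 : W' x = 0 := by simp only [hW'def, if_neg hx]
      rw [hW'0]
      by_cases hc : x ∈ closure Ω
      · have hf := hfr x hc hx
        have hV0 : V x = 0 := h0 x hf
        have hVd : HasFDerivAt V (0 : (Fin (m+1) → ℝ) →L[ℝ] _) x := by
          have := (hdiff x).hasFDerivAt
          rwa [h1 x hf] at this
        rw [hasFDerivAt_iff_isLittleO_nhds_zero] at hVd ⊢
        have hbig : (fun h => W (x + h) - W x - (0 : (Fin (m+1) → ℝ) →L[ℝ] (Fin (m+1) → ℝ)) h)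
            =O[nhds 0] fun h => V (x + h) - V x - (0 : (Fin (m+1) → ℝ) →L[ℝ] (Fin (m+1) → ℝ)) h := by
          refine Asymptotics.isBigO_of_le _ (fun y => ?_)
          have hWx : Ω.indicator V x = 0 := Set.indicator_of_notMem hx V
          simp only [ContinuousLinearMap.zero_apply, sub_zero, hV0, hWdef, hWx]
          exact norm_indicator_le_norm_self (s := Ω) (f := V) (a := x + y)
        exact hbig.trans_isLittleO hVd
      · have hopen : IsOpen (closure Ω)ᶜ := isOpen_compl_iff.mpr isClosed_closure
        have h0' : HasFDerivAt (fun _ : Fin (m+1) → ℝ => (0 : Fin (m+1) → ℝ))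
            (0 : (Fin (m+1) → ℝ) →L[ℝ] _) x := hasFDerivAt_const _ _
        refine h0'.congr_of_eventuallyEq ?_
        filter_upwards [hopen.mem_nhds hc] with y hy
        exact Set.indicator_of_notMem (fun h => hy (subset_closure h)) V
  -- continuity of the divergence of V
  have hfd : Continuous fun x => fderiv ℝ V x := hV.continuous_fderiv (by simp)
  set g : (Fin (m+1) → ℝ) → ℝ := fun x => ∑ i, fderiv ℝ V x (Pi.single i 1) i with hgdef
  have hgcont : Continuous g := by
    refine continuous_finset_sum _ (fun i _ => ?_)
    exact (continuous_apply i).comp (hfd.clm_apply continuous_const)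
  have hind : (fun x => ∑ i, W' x (Pi.single i 1) i) = Ω.indicator g := by
    funext x
    by_cases hx : x ∈ Ω
    · simp [hW'def, hgdef, hx, Set.indicator_of_mem]
    · simp [hW'def, hgdef, hx, Set.indicator_of_notMem]
  have hΩsub : Ω ⊆ Icc a b := by
    intro x hx
    rw [mem_Icc]
    constructor <;> intro i <;>
      have := hsubI x (subset_closure hx) i
    · exact le_of_lt this.1
    · exact le_of_lt this.2
  have hle : a ≤ b := fun i => by
    simp only [a, b]; linarith
  have key := integral_divergence_of_hasFDerivAt_off_countable a b hle W W' ∅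
    countable_empty
    ((Differentiable.continuous (fun x => (hW x).differentiableAt)).continuousOn)
    (fun x _ => hW x)
    (by
      rw [hind]
      exact (hgcont.continuousOn.integrableOn_compact isCompact_Icc).indicator hO.measurableSet)
  have hfaces : ∀ (i : Fin (m+1)) (c : ℝ), c ∉ Ioo (-R) R →
      ∀ x : Fin m → ℝ, W (i.insertNth c x) i = 0 := by
    intro i c hc x
    have hni : i.insertNth c x ∉ Ω := by
      intro hmem
      exact hc (by simpa using hsubI _ (subset_closure hmem) i)
    simp [hWdef, Set.indicator_of_notMem hni]
  rw [hind] at key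
  have hRHS : ∑ i : Fin (m+1),
      ((∫ x in Icc (a ∘ i.succAbove) (b ∘ i.succAbove), W (i.insertNth (b i) x) i) -
        ∫ x in Icc (a ∘ i.succAbove) (b ∘ i.succAbove), W (i.insertNth (a i) x) i) = 0 := by
    refine Finset.sum_eq_zero (fun i _ => ?_)
    have hb' : (b i) ∉ Ioo (-R) R := by simp [b]
    have ha' : (a i) ∉ Ioo (-R) R := by simp [a]
    rw [setIntegral_congr_fun measurableSet_Icc (fun x _ => hfaces i (b i) hb' x),
      setIntegral_congr_fun measurableSet_Icc (fun x _ => hfaces i (a i) ha' x)]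
    simp
  rw [hRHS] at key
  rw [setIntegral_indicator hO.measurableSet,
    Set.inter_eq_self_of_subset_right hΩsub] at key
  exact key

lemma div_En_zero {m : ℕ} (Ω : Set (En (m+1))) (hO : IsOpen Ω)
    (hb : Bornology.IsBounded Ω)
    (V : En (m+1) → En (m+1)) (hV : ContDiff ℝ (⊤ : ℕ∞) V)
    (h0 : ∀ x ∈ frontier Ω, V x = 0) (h1 : ∀ x ∈ frontier Ω, fderiv ℝ V x = 0) :
    ∫ x in Ω, vdiv V x = 0 := by
  set eL : En (m+1) ≃L[ℝ] (Fin (m+1) → ℝ) := EuclideanSpace.equiv (Fin (m+1)) ℝ with heL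
  set Ω' : Set (Fin (m+1) → ℝ) := eL.symm ⁻¹' Ω with hΩ'
  set Vp : (Fin (m+1) → ℝ) → (Fin (m+1) → ℝ) := fun y => eL (V (eL.symm y)) with hVp
  have hO' : IsOpen Ω' := hO.preimage eL.symm.continuous
  have hb' : Bornology.IsBounded Ω' := by
    have him : Ω' = eL '' Ω := (ContinuousLinearEquiv.image_eq_preimage_symm eL Ω).symm
    rw [him]
    exact ((eL : En (m+1) →L[ℝ] (Fin (m+1) → ℝ)).lipschitz.isBounded_image hb)
  have hVp' : ContDiff ℝ (⊤ : ℕ∞) Vp :=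
    (eL : En (m+1) →L[ℝ] (Fin (m+1) → ℝ)).contDiff.comp
      (hV.comp (eL.symm : (Fin (m+1) → ℝ) →L[ℝ] En (m+1)).contDiff)
  have hfrmap : frontier Ω' = eL.symm ⁻¹' frontier Ω :=
    (Homeomorph.preimage_frontier eL.symm.toHomeomorph Ω).symm
  have hDVp : ∀ y, fderiv ℝ Vp y =
      (eL : En (m+1) →L[ℝ] (Fin (m+1) → ℝ)).comp
        ((fderiv ℝ V (eL.symm y)).comp (eL.symm : (Fin (m+1) → ℝ) →L[ℝ] En (m+1))) := by
    intro y
    have e1 : Vp = (⇑eL) ∘ (V ∘ ⇑eL.symm) := rfl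
    rw [e1, ContinuousLinearEquiv.comp_fderiv, ContinuousLinearEquiv.comp_right_fderiv]
  have h0' : ∀ y ∈ frontier Ω', Vp y = 0 := by
    intro y hy
    rw [hfrmap] at hy
    show eL (V (eL.symm y)) = 0
    rw [h0 (eL.symm y) hy, map_zero]
  have h1' : ∀ y ∈ frontier Ω', fderiv ℝ Vp y = 0 := by
    intro y hy
    rw [hfrmap] at hy
    rw [hDVp y, h1 (eL.symm y) hy]
    ext v
    simp
  have key := div_pi_zero Ω' hO' hb' Vp hVp' h0' h1'
  have hMP := EuclideanSpace.volume_preserving_symm_measurableEquiv_toLp (Fin (m+1))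
  have hemb : MeasurableEmbedding ((MeasurableEquiv.toLp 2 (Fin (m+1) → ℝ)).symm) :=
    ((MeasurableEquiv.toLp 2 (Fin (m+1) → ℝ)).symm).measurableEmbedding
  have hφ : ⇑((MeasurableEquiv.toLp 2 (Fin (m+1) → ℝ)).symm) = ⇑eL := rfl
  have hpre : ((MeasurableEquiv.toLp 2 (Fin (m+1) → ℝ)).symm) ⁻¹' Ω' = Ω := by
    ext x
    simp [hφ, hΩ']
  have htrans := hMP.setIntegral_preimage_emb hemb
    (fun y => ∑ i, fderiv ℝ Vp y (Pi.single i 1) i) Ω'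
  rw [hpre] at htrans
  have hpt : ∀ x : En (m+1),
      (∑ i, fderiv ℝ Vp ((MeasurableEquiv.toLp 2 (Fin (m+1) → ℝ)).symm x) (Pi.single i 1) i)
        = vdiv V x := by
    intro x
    rw [hφ]
    rw [hDVp (eL x)]
    unfold vdiv
    refine Finset.sum_congr rfl (fun i _ => ?_)
    simp only [ContinuousLinearMap.comp_apply, ContinuousLinearEquiv.coe_coe,
      ContinuousLinearEquiv.symm_apply_apply]
    rfl
  rw [← key, ← htrans]
  exact setIntegral_congr_fun hO.measurableSet (fun x _ => (hpt x).symm)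

lemma En.sum_single {n : ℕ} (v : En n) :
    ∑ i, v i • EuclideanSpace.single i (1 : ℝ) = v := by
  have h := (EuclideanSpace.basisFun (Fin n) ℝ).sum_repr v
  simp only [EuclideanSpace.basisFun_apply, EuclideanSpace.basisFun_repr] at h
  exact h

lemma clm_apply_sum {n : ℕ} (L : En n →L[ℝ] ℝ) (v : En n) :
    L v = ∑ i, v i * L (EuclideanSpace.single i 1) := by
  conv_lhs => rw [← En.sum_single v]
  rw [map_sum]
  refine Finset.sum_congr rfl (fun i _ => ?_)
  rw [_root_.map_smul]
  rfl

lemma vdiv_smul {n : ℕ} (φ : En n → ℝ) (Y : En n → En n) (x : En n)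
    (hφ : DifferentiableAt ℝ φ x) (hY : DifferentiableAt ℝ Y x) :
    vdiv (fun y => φ y • Y y) x = fderiv ℝ φ x (Y x) + φ x * vdiv Y x := by
  unfold vdiv
  rw [fderiv_fun_smul hφ hY]
  have : ∀ i : Fin n,
      ((φ x • fderiv ℝ Y x + (fderiv ℝ φ x).smulRight (Y x)) (EuclideanSpace.single i 1)) i
      = φ x * (fderiv ℝ Y x (EuclideanSpace.single i 1)) i
        + fderiv ℝ φ x (EuclideanSpace.single i 1) * (Y x) i := by
    intro i
    simp [ContinuousLinearMap.smulRight_apply, mul_comm]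
  rw [Finset.sum_congr rfl (fun i _ => this i), Finset.sum_add_distrib, ← Finset.mul_sum]
  rw [clm_apply_sum (fderiv ℝ φ x) (Y x)]
  ring_nf
  congr 1
  refine Finset.sum_congr rfl (fun i _ => by ring)

lemma gradient_eq_sum {n : ℕ} (η : En n → ℝ) (x : En n) :
    gradient η x = ∑ i, fderiv ℝ η x (EuclideanSpace.single i 1) • EuclideanSpace.single i 1 := by
  apply ext_inner_right ℝ
  intro w
  rw [show gradient η x = (InnerProductSpace.toDual ℝ (En n)).symm (fderiv ℝ η x) from rfl,
    InnerProductSpace.toDual_symm_apply]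
  rw [sum_inner]
  rw [clm_apply_sum (fderiv ℝ η x) w]
  refine Finset.sum_congr rfl (fun i _ => ?_)
  rw [real_inner_smul_left, EuclideanSpace.inner_single_left]
  simp [mul_comm]

lemma gradient_contDiff {n : ℕ} (η : En n → ℝ) (hη : ContDiff ℝ (⊤ : ℕ∞) η) :
    ContDiff ℝ (⊤ : ℕ∞) (fun y => gradient η y) := by
  have : (fun y => gradient η y) =
      fun y => ∑ i, fderiv ℝ η y (EuclideanSpace.single i 1) • EuclideanSpace.single i 1 := by
    funext y; exact gradient_eq_sum η y
  rw [this]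
  refine ContDiff.sum (fun i _ => ?_)
  exact ((hη.fderiv_right (by simp)).clm_apply contDiff_const).smul contDiff_const

lemma wInt {n : ℕ} (η : En n → ℝ) (hηc : Continuous η) (Ω : Set (En n)) (F : En n → ℝ) :
    ∫ x, F x ∂(wMeasure η Ω) = ∫ x in Ω, Real.exp (-η x) * F x := by
  have hm : Measurable fun x => Real.toNNReal (Real.exp (-η x)) :=
    (hηc.neg.rexp).measurable.real_toNNReal
  have hwm : wMeasure η Ω = (volume.restrict Ω).withDensity
      (fun x => ((Real.toNNReal (Real.exp (-η x)) : ℝ≥0) : ℝ≥0∞)) := rfl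
  rw [hwm, integral_withDensity_eq_integral_smul hm]
  refine integral_congr_ae (Filter.Eventually.of_forall (fun x => ?_))
  simp [NNReal.smul_def, Real.coe_toNNReal _ (Real.exp_pos (-η x)).le]

end Aux

section Main
open Set

/-- Integration by parts identity:
`−∫ ⟨u, T(T(∇η), ∇u)⟩ dm = ½ ∫ |u|² div_η(T(T(∇η))) dm` for `u` vanishing on `∂Ω`. -/
theorem integral_identity_T_grad_eta
    (n : ℕ) (hn : 1 ≤ n)
    (Ω : Set (En n)) (hΩopen : IsOpen Ω) (hΩbd : Bornology.IsBounded Ω)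
    (hΩconn : IsConnected Ω)
    (η : En n → ℝ) (hη : ContDiff ℝ (⊤ : ℕ∞) η)
    (T : En n → (En n →L[ℝ] En n)) (hT : ContDiff ℝ (⊤ : ℕ∞) T)
    (hTsym : ∀ x v w, ⟪T x v, w⟫ = ⟪v, T x w⟫)
    (hTpos : ∀ x v, v ≠ 0 → 0 < ⟪T x v, v⟫)
    (u : En n → En n) (hu : ContDiff ℝ (⊤ : ℕ∞) u)
    (hbd : ∀ x ∈ frontier Ω, u x = 0) :
    -(∫ x, ∑ j, u x j *
        ⟪T x (T x (gradient η x)), gradient (fun y => u y j) x⟫ ∂(wMeasure η Ω))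
    = (1 / 2) * ∫ x, ‖u x‖ ^ 2 *
        vdivEta η (fun y => T y (T y (gradient η y))) x ∂(wMeasure η Ω) := by
  obtain ⟨m, rfl⟩ : ∃ m, n = m + 1 := ⟨n - 1, by omega⟩
  have hηd : Differentiable ℝ η := hη.differentiable (by simp)
  have hud : Differentiable ℝ u := hu.differentiable (by simp)
  -- smoothness of the gradient of η
  have gradsm : ContDiff ℝ (⊤ : ℕ∞) (fun y => gradient η y) := gradient_contDiff η hη
  set Y : En (m+1) → En (m+1) := fun y => T y (T y (gradient η y)) with hYdef
  have hY : ContDiff ℝ (⊤ : ℕ∞) Y := hT.clm_apply (hT.clm_apply gradsm)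
  set g : En (m+1) → ℝ := fun y => ⟪u y, u y⟫ with hgdef
  have hg : ContDiff ℝ (⊤ : ℕ∞) g := ContDiff.inner ℝ hu hu
  set φ : En (m+1) → ℝ := fun y => g y * Real.exp (-η y) with hφdef
  have hφ : ContDiff ℝ (⊤ : ℕ∞) φ := hg.mul (hη.neg.exp)
  set V : En (m+1) → En (m+1) := fun y => φ y • Y y with hVdef
  have hV : ContDiff ℝ (⊤ : ℕ∞) V := hφ.smul hY
  -- derivative of g
  have hgderiv : ∀ x, HasFDerivAt g
      ((fderivInnerCLM ℝ (u x, u x)).comp ((fderiv ℝ u x).prod (fderiv ℝ u x))) x :=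
    fun x => (hud x).hasFDerivAt.inner ℝ (hud x).hasFDerivAt
  have hgD : ∀ x w, fderiv ℝ g x w = ⟪u x, fderiv ℝ u x w⟫ + ⟪fderiv ℝ u x w, u x⟫ := by
    intro x w
    rw [(hgderiv x).fderiv]
    simp [fderivInnerCLM_apply]
  -- boundary vanishing
  have hg0 : ∀ x ∈ frontier Ω, g x = 0 := by
    intro x hx; simp [hgdef, hbd x hx]
  have hgD0 : ∀ x ∈ frontier Ω, fderiv ℝ g x = 0 := by
    intro x hx
    ext w
    rw [hgD x w, hbd x hx]
    simp
  have hexpd : ∀ x, HasFDerivAt (fun y => Real.exp (-η y))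
      (Real.exp (-η x) • (-(fderiv ℝ η x))) x := by
    intro x
    exact ((hηd x).hasFDerivAt.neg).exp
  have hφ0 : ∀ x ∈ frontier Ω, φ x = 0 := by
    intro x hx; simp [hφdef, hg0 x hx]
  have hφD : ∀ x, fderiv ℝ φ x
      = g x • (Real.exp (-η x) • (-(fderiv ℝ η x))) + Real.exp (-η x) • fderiv ℝ g x := by
    intro x
    rw [fderiv_fun_mul (hg.differentiable (by simp) x) ((hexpd x).differentiableAt),
      (hexpd x).fderiv]
  have hφD0 : ∀ x ∈ frontier Ω, fderiv ℝ φ x = 0 := by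
    intro x hx
    rw [hφD x, hg0 x hx, hgD0 x hx]
    simp
  have hV0 : ∀ x ∈ frontier Ω, V x = 0 := by
    intro x hx; simp [hVdef, hφ0 x hx]
  have hVD0 : ∀ x ∈ frontier Ω, fderiv ℝ V x = 0 := by
    intro x hx
    have := fderiv_fun_smul (𝕜 := ℝ) (hφ.differentiable (by simp) x) (hY.differentiable (by simp) x)
    rw [hVdef]
    rw [this, hφ0 x hx, hφD0 x hx]
    ext w
    simp
  -- divergence theorem
  have key : ∫ x in Ω, vdiv V x = 0 := div_En_zero Ω hΩopen hΩbd V hV hV0 hVD0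
  -- pointwise divergence identity
  have hdivV : ∀ x, vdiv V x = Real.exp (-η x) * (fderiv ℝ g x (Y x))
      + Real.exp (-η x) * (g x * (vdiv Y x - fderiv ℝ η x (Y x))) := by
    intro x
    rw [hVdef]
    rw [vdiv_smul φ Y x (hφ.differentiable (by simp) x) (hY.differentiable (by simp) x)]
    rw [hφD x]
    simp only [ContinuousLinearMap.add_apply, ContinuousLinearMap.coe_smul',
      Pi.smul_apply, ContinuousLinearMap.neg_apply, smul_eq_mul, hφdef]
    ring
  -- gradient/fderiv link
  have hgradinner : ∀ (f : En (m+1) → ℝ) (x w : En (m+1)),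
      ⟪gradient f x, w⟫ = fderiv ℝ f x w := by
    intro f x w
    exact InnerProductSpace.toDual_symm_apply
  -- coordinate derivative
  have hcoord : ∀ (j : Fin (m+1)) x w, fderiv ℝ (fun y => u y j) x w = (fderiv ℝ u x w) j := by
    intro j x w
    have h2 : HasFDerivAt (⇑(EuclideanSpace.proj j : En (m+1) →L[ℝ] ℝ) ∘ u)
        ((EuclideanSpace.proj j).comp (fderiv ℝ u x)) x :=
      (EuclideanSpace.proj j).hasFDerivAt.comp x (hud x).hasFDerivAt
    rw [show (fun y => u y j) = (⇑(EuclideanSpace.proj j : En (m+1) →L[ℝ] ℝ) ∘ u) from rfl,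
      h2.fderiv]
    rfl
  -- LHS integrand identity
  have hA : ∀ x, (∑ j, u x j * ⟪T x (T x (gradient η x)), gradient (fun y => u y j) x⟫)
      = (1/2) * fderiv ℝ g x (Y x) := by
    intro x
    have hterm : ∀ j : Fin (m+1), u x j * ⟪T x (T x (gradient η x)), gradient (fun y => u y j) x⟫
        = u x j * (fderiv ℝ u x (Y x)) j := by
      intro j
      congr 1
      rw [real_inner_comm, hgradinner (fun y => u y j) x, hcoord j x]
    rw [Finset.sum_congr rfl (fun j _ => hterm j)]
    rw [hgD x (Y x)]
    have hin2 : (⟪fderiv ℝ u x (Y x), u x⟫ : ℝ) = ⟪u x, fderiv ℝ u x (Y x)⟫ :=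
      real_inner_comm _ _
    have hin : (⟪u x, fderiv ℝ u x (Y x)⟫ : ℝ) = ∑ j, u x j * (fderiv ℝ u x (Y x)) j := by
      rw [PiLp.inner_apply]
      simp [RCLike.inner_apply, mul_comm]
    rw [hin2, hin]
    ring
  -- RHS integrand identity
  have hB : ∀ x, ‖u x‖ ^ 2 * vdivEta η Y x = g x * (vdiv Y x - fderiv ℝ η x (Y x)) := by
    intro x
    have h1 : ‖u x‖ ^ 2 = g x := (real_inner_self_eq_norm_sq (u x)).symm
    have h2 : vdivEta η Y x = vdiv Y x - fderiv ℝ η x (Y x) := by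
      unfold vdivEta
      rw [hgradinner η x (Y x)]
    rw [h1, h2]
  -- continuity and integrability
  have hIO : ∀ F : En (m+1) → ℝ, Continuous F → IntegrableOn F Ω volume := by
    intro F hF
    exact (hF.continuousOn.integrableOn_compact hΩbd.isCompact_closure).mono_set subset_closure
  have hcont1 : Continuous fun x => fderiv ℝ g x (Y x) :=
    ((hg.fderiv_right (m := (⊤ : ℕ∞)) (by simp)).continuous).clm_apply hY.continuous
  have hcontdY : Continuous fun x => fderiv ℝ Y x := (hY.fderiv_right (m := (⊤ : ℕ∞)) (by simp)).continuous
  have hcont2 : Continuous fun x => vdiv Y x := by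
    unfold vdiv
    refine continuous_finset_sum _ (fun i _ => ?_)
    exact (EuclideanSpace.proj i).continuous.comp (hcontdY.clm_apply continuous_const)
  have hcont3 : Continuous fun x => fderiv ℝ η x (Y x) :=
    ((hη.fderiv_right (m := (⊤ : ℕ∞)) (by simp)).continuous).clm_apply hY.continuous
  set F₁ : En (m+1) → ℝ := fun x => Real.exp (-η x) * fderiv ℝ g x (Y x) with hF₁
  set F₂ : En (m+1) → ℝ :=
    fun x => Real.exp (-η x) * (g x * (vdiv Y x - fderiv ℝ η x (Y x))) with hF₂
  have hcF₁ : Continuous F₁ := (hη.continuous.neg.rexp).mul hcont1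
  have hcF₂ : Continuous F₂ :=
    (hη.continuous.neg.rexp).mul (hg.continuous.mul (hcont2.sub hcont3))
  have hsplit : (∫ x in Ω, F₁ x) + (∫ x in Ω, F₂ x) = 0 := by
    rw [← integral_add (hIO F₁ hcF₁) (hIO F₂ hcF₂)]
    rw [← key]
    exact setIntegral_congr_fun hΩopen.measurableSet (fun x _ => (hdivV x).symm)
  -- convert weighted integrals
  have hLHS : ∫ x, ∑ j, u x j *
      ⟪T x (T x (gradient η x)), gradient (fun y => u y j) x⟫ ∂(wMeasure η Ω)
      = (1/2) * ∫ x in Ω, F₁ x := by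
    rw [wInt η hη.continuous Ω]
    rw [← integral_const_mul]
    refine setIntegral_congr_fun hΩopen.measurableSet (fun x _ => ?_)
    rw [hA x]
    rw [hF₁]
    ring
  have hRHS : ∫ x, ‖u x‖ ^ 2 * vdivEta η (fun y => T y (T y (gradient η y))) x ∂(wMeasure η Ω)
      = ∫ x in Ω, F₂ x := by
    rw [wInt η hη.continuous Ω]
    refine setIntegral_congr_fun hΩopen.measurableSet (fun x _ => ?_)
    rw [hF₂]
    rw [show vdivEta η (fun y => T y (T y (gradient η y))) x = vdivEta η Y x from rfl, hB x]
  rw [hLHS, hRHS]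
  linarith

end Main
end
end

section
/- Let u : ℝⁿ → ℝⁿ be a smooth map vanishing on ∂Ω, let y : ℝⁿ → ℝ be a smooth function, and let a ∈ ℝ. Then −∫_Ω (y − a) ( |u|² 𝓛y + 2⟨u, T(∇y, ∇u)⟩ ) dm = ∫_Ω |u|² ⟨T(∇y), ∇y⟩ dm. -/
open MeasureTheory Real
open scoped RealInnerProductSpace BigOperators

noncomputable section

open Set
open scoped Classical

section Aux
variable {n : ℕ}

lemma abs_coord_le_norm (z : En n) (i : Fin n) : |z i| ≤ ‖z‖ := by
  have h := abs_real_inner_le_norm (EuclideanSpace.single i (1:ℝ)) z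
  simpa [EuclideanSpace.inner_single_left, EuclideanSpace.norm_single] using h

lemma integral_vdiv_zero (hn : 1 ≤ n) (Ω : Set (En n)) (hΩo : IsOpen Ω)
    (hΩbd : Bornology.IsBounded Ω) (F : En n → En n) (hF : ContDiff ℝ (⊤ : ℕ∞) F)
    (hF0 : ∀ x ∈ frontier Ω, F x = 0) (hF'0 : ∀ x ∈ frontier Ω, fderiv ℝ F x = 0) :
    ∫ x in Ω, vdiv F x = 0 := by
  obtain ⟨m, rfl⟩ : ∃ m, n = m + 1 := ⟨n - 1, (Nat.succ_pred_eq_of_pos hn).symm⟩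
  have hFd : Differentiable ℝ F := hF.differentiable (by simp)
  set Y : En (m+1) → En (m+1) := Set.indicator (closure Ω) F with hY
  set G : En (m+1) → (En (m+1) →L[ℝ] En (m+1)) :=
    fun x => if x ∈ Ω then fderiv ℝ F x else 0 with hG
  -- derivative of Y everywhere
  have hYd : ∀ x, HasFDerivAt Y (G x) x := by
    intro x
    by_cases hx : x ∈ Ω
    · have : Y =ᶠ[nhds x] F :=
        Filter.eventuallyEq_of_mem (hΩo.mem_nhds hx) fun z hz =>
          Set.indicator_of_mem (subset_closure hz) F
      simpa [hG, hx] using (hFd x).hasFDerivAt.congr_of_eventuallyEq this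
    · by_cases hx' : x ∈ closure Ω
      · -- frontier point
        have hfr : x ∈ frontier Ω := ⟨hx', by simpa [hΩo.interior_eq] using hx⟩
        have hGx : G x = 0 := by simp [hG, hx]
        rw [hGx]
        have hFx : F x = 0 := hF0 x hfr
        have hlittle : (fun z => F z) =o[nhds x] fun z => z - x := by
          have := (hFd x).hasFDerivAt.isLittleO
          rw [hF'0 x hfr] at this
          simpa [hFx] using this
        have hbig : Y =O[nhds x] F := by
          refine Asymptotics.isBigO_of_le _ fun z => ?_
          by_cases hz : z ∈ closure Ω <;> simp [hY, Set.indicator_apply, hz]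
        have hYx : Y x = 0 := by simp [hY, Set.indicator_of_mem hx', hFx]
        exact HasFDerivAt.of_isLittleO (by simpa [hYx] using hbig.trans_isLittleO hlittle)
      · have : Y =ᶠ[nhds x] fun _ => 0 :=
          Filter.eventuallyEq_of_mem (isClosed_closure.isOpen_compl.mem_nhds hx') fun z hz =>
            Set.indicator_of_notMem hz F
        have hGx : G x = 0 := by simp [hG, hx]
        rw [hGx]
        exact (hasFDerivAt_const (0 : En (m+1)) x).congr_of_eventuallyEq this
  -- continuity of Y
  have hYc : Continuous Y := by
    rw [continuous_iff_continuousAt]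
    intro x
    by_cases hx : x ∈ Ω
    · have : Y =ᶠ[nhds x] F :=
        Filter.eventuallyEq_of_mem (hΩo.mem_nhds hx) fun z hz =>
          Set.indicator_of_mem (subset_closure hz) F
      exact (hFd x).continuousAt.congr this.symm
    · by_cases hx' : x ∈ closure Ω
      · have hfr : x ∈ frontier Ω := ⟨hx', by simpa [hΩo.interior_eq] using hx⟩
        have hFx : F x = 0 := hF0 x hfr
        have hYx : Y x = 0 := by simp [hY, Set.indicator_of_mem hx', hFx]
        rw [ContinuousAt, hYx]
        refine squeeze_zero_norm (a := fun z => ‖F z‖) (fun z => norm_indicator_le_norm_self F z) ?_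
        have := ((hFd.continuous.norm).tendsto x)
        rwa [hFx, norm_zero] at this
      · have : Y =ᶠ[nhds x] fun _ => 0 :=
          Filter.eventuallyEq_of_mem (isClosed_closure.isOpen_compl.mem_nhds hx') fun z hz =>
            Set.indicator_of_notMem hz F
        exact continuousAt_const.congr this.symm
  -- bounding box
  obtain ⟨R, hRsub⟩ : ∃ R, closure Ω ⊆ Metric.closedBall 0 R := hΩbd.closure.subset_closedBall 0
  set r : ℝ := max R 0 with hr
  have hr0 : (0:ℝ) ≤ r := le_max_right _ _
  have hsub : closure Ω ⊆ Metric.closedBall 0 r :=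
    hRsub.trans (Metric.closedBall_subset_closedBall (le_max_left _ _))
  have hcoord : ∀ z ∈ closure Ω, ∀ i, |z i| ≤ r := by
    intro z hz i
    refine (abs_coord_le_norm z i).trans ?_
    have := hsub hz
    simpa [Metric.mem_closedBall, dist_zero_right] using this
  set aa : Fin (m+1) → ℝ := fun _ => -(r+1) with haa
  set bb : Fin (m+1) → ℝ := fun _ => (r+1) with hbb
  have hle : aa ≤ bb := fun i => by simp [haa, hbb]; linarith
  set φ := (EuclideanSpace.equiv (Fin (m+1)) ℝ).symm with hφ
  set f : Fin (m+1) → (Fin (m+1) → ℝ) → ℝ := fun i p => Y (φ p) i with hf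
  set f' : Fin (m+1) → (Fin (m+1) → ℝ) → ((Fin (m+1) → ℝ) →L[ℝ] ℝ) :=
    fun i p => (EuclideanSpace.proj i).comp
      ((G (φ p)).comp (φ.toContinuousLinearMap)) with hf'
  have Hc : ∀ i, ContinuousOn (f i) (Icc aa bb) := by
    intro i
    exact ((EuclideanSpace.proj i).continuous.comp (hYc.comp φ.continuous)).continuousOn
  have Hd : ∀ p ∈ (Set.pi univ fun i => Ioo (aa i) (bb i)) \ (∅ : Set (Fin (m+1) → ℝ)),
      ∀ i, HasFDerivAt (f i) (f' i p) p := by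
    intro p _ i
    have h1 : HasFDerivAt (fun q => Y (φ q)) ((G (φ p)).comp (φ.toContinuousLinearMap)) p :=
      (hYd (φ p)).comp p (φ.hasFDerivAt)
    exact (EuclideanSpace.proj i).hasFDerivAt.comp p h1
  set D : En (m+1) → ℝ := Set.indicator Ω (vdiv F) with hD
  have hvdivc : Continuous (vdiv F) := by
    have h1 : Continuous (fderiv ℝ F) := hF.continuous_fderiv (by simp)
    refine continuous_finset_sum _ fun i _ => ?_
    exact (EuclideanSpace.proj i).continuous.comp (h1.clm_apply continuous_const)
  have hintegrand : ∀ p, (∑ i, f' i p (Pi.single i 1)) = D (φ p) := by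
    intro p
    have hsingle : ∀ i : Fin (m+1), φ (Pi.single i (1:ℝ)) = EuclideanSpace.single i 1 := fun i => rfl
    by_cases hp : φ p ∈ Ω
    · simp only [hD, Set.indicator_of_mem hp, hf', ContinuousLinearMap.comp_apply,
        ContinuousLinearEquiv.coe_coe, hG, if_pos hp, vdiv]
      rfl
    · simp [hD, Set.indicator_of_notMem hp, hf', hG, if_neg hp]
  have hHi : IntegrableOn (fun p => ∑ i, f' i p (Pi.single i 1)) (Icc aa bb) := by
    have heq : (fun p => ∑ i, f' i p (Pi.single i 1))
        = Set.indicator (⇑φ ⁻¹' Ω) fun p => vdiv F (φ p) := by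
      funext p
      rw [hintegrand p, hD]
      by_cases hp : φ p ∈ Ω <;> simp [Set.indicator_apply, hp]
    rw [heq]
    exact ((hvdivc.comp φ.continuous).continuousOn.integrableOn_compact isCompact_Icc).indicator
      (hΩo.preimage φ.continuous).measurableSet
  have hdiv := integral_divergence_of_hasFDerivAt_off_countable' aa bb hle f f' ∅
    countable_empty Hc Hd hHi
  -- the faces vanish
  have hface : ∀ (i : Fin (m+1)) (c : ℝ), |c| = r + 1 → ∀ x : Fin m → ℝ,
      f i (i.insertNth c x) = 0 := by
    intro i c hc x
    have hnot : φ (i.insertNth c x) ∉ closure Ω := by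
      intro hmem
      have h1 := hcoord _ hmem i
      have hco0 : (φ (i.insertNth c x)) i = (i.insertNth c x : Fin (m+1) → ℝ) i := by rfl
      have hco : (φ (i.insertNth c x)) i = c := by rw [hco0]; simp
      rw [hco, hc] at h1
      linarith
    simp [hf, hY, Set.indicator_of_notMem hnot]
  have hrabs : |r + 1| = r + 1 := abs_of_nonneg (by linarith)
  have hrabs' : |-(r + 1)| = r + 1 := by rw [abs_neg]; exact hrabs
  have hzero : ∫ p in Icc aa bb, ∑ i, f' i p (Pi.single i 1) ∂volume = 0 := by
    rw [hdiv]
    refine Finset.sum_eq_zero fun i _ => ?_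
    have h1 : ∀ x : Fin m → ℝ, f i (i.insertNth (bb i) x) = 0 := hface i _ (by simp [hbb, hrabs])
    have h2 : ∀ x : Fin m → ℝ, f i (i.insertNth (aa i) x) = 0 := hface i _ (by simp only [haa]; exact hrabs')
    simp [h1, h2]
  -- transfer to the Euclidean side
  set ψ : (Fin (m+1) → ℝ) ≃ᵐ En (m+1) := (MeasurableEquiv.toLp 2 (Fin (m+1) → ℝ)) with hψ
  have hψvol : MeasurePreserving ψ volume volume :=
    (EuclideanSpace.volume_preserving_symm_measurableEquiv_toLp _).symm
  set S : Set (En (m+1)) := ψ.symm ⁻¹' (Icc aa bb) with hS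
  have hpre : ⇑ψ ⁻¹' S = Icc aa bb := by
    rw [hS, ← Set.preimage_comp]
    have : (⇑ψ.symm ∘ ⇑ψ) = id := by
      funext q; exact ψ.symm_apply_apply q
    rw [this, Set.preimage_id]
  have hcoe : ∀ p, ψ p = φ p := fun p => rfl
  have htrans : ∫ p in Icc aa bb, D (φ p) ∂volume = ∫ x in S, D x ∂volume := by
    rw [← hpre]
    have := hψvol.setIntegral_preimage_emb ψ.measurableEmbedding D S
    rw [← this]
    exact setIntegral_congr_fun (by rw [hpre]; exact measurableSet_Icc)
      (fun p _ => by rw [hcoe p])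
  have hSD : ∫ x in S, D x ∂volume = ∫ x in Ω, vdiv F x ∂volume := by
    rw [hD, setIntegral_indicator hΩo.measurableSet]
    congr 1
    rw [Set.inter_eq_self_of_subset_right]
    intro x hx
    rw [hS, Set.mem_preimage]
    have hcoord' := hcoord x (subset_closure hx)
    have hsx : ∀ i, (ψ.symm x : Fin (m+1) → ℝ) i = x i := fun i => rfl
    rw [Set.mem_Icc]
    constructor <;> rw [Pi.le_def] <;> intro i <;> rw [hsx i] <;>
      [skip; skip] <;>
      · have h1 := (abs_le.mp (hcoord' i)).1
        have h2 := (abs_le.mp (hcoord' i)).2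
        simp only [haa, hbb]
        linarith
  have hfun : (fun p => ∑ i, f' i p (Pi.single i 1)) = fun p => D (φ p) := funext hintegrand
  rw [hfun] at hzero
  rw [← hSD, ← htrans, hzero]


lemma inner_grad (f : En n → ℝ) (x v : En n) :
    ⟪gradient f x, v⟫ = fderiv ℝ f x v := by
  rw [gradient, InnerProductSpace.toDual_symm_apply]

lemma rep (v : En n) : ∑ i, v i • EuclideanSpace.single i (1:ℝ) = v := by
  have := (EuclideanSpace.basisFun (Fin n) ℝ).sum_repr' v
  simpa [EuclideanSpace.basisFun_apply, real_inner_comm, EuclideanSpace.inner_single_right] using this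

lemma contDiff_gradient (y : En n → ℝ) (hy : ContDiff ℝ (⊤ : ℕ∞) y) :
    ContDiff ℝ (⊤ : ℕ∞) (fun x => gradient y x) := by
  have h := hy.fderiv_right (m := (⊤ : ℕ∞)) (by simp)
  exact ((InnerProductSpace.toDual ℝ (En n)).symm.toContinuousLinearEquiv :
    (En n →L[ℝ] ℝ) ≃L[ℝ] En n).toContinuousLinearMap.contDiff.comp h

lemma coord_fderiv (u : En n → En n) (hu : Differentiable ℝ u) (x : En n) (j : Fin n) (w : En n) :
    fderiv ℝ u x w j = fderiv ℝ (fun z => u z j) x w := by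
  have h : HasFDerivAt (⇑(EuclideanSpace.proj (𝕜 := ℝ) j : En n →L[ℝ] ℝ) ∘ u)
      ((EuclideanSpace.proj (𝕜 := ℝ) j).comp (fderiv ℝ u x)) x :=
    (EuclideanSpace.proj j).hasFDerivAt.comp x (hu x).hasFDerivAt
  have heq : (fun z => u z j) = (⇑(EuclideanSpace.proj (𝕜 := ℝ) j) ∘ u) := rfl
  rw [heq, h.fderiv]
  rfl

lemma vdiv_key (η : En n → ℝ) (hη : ContDiff ℝ (⊤ : ℕ∞) η)
    (T : En n → (En n →L[ℝ] En n)) (hT : ContDiff ℝ (⊤ : ℕ∞) T)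
    (u : En n → En n) (hu : ContDiff ℝ (⊤ : ℕ∞) u)
    (y : En n → ℝ) (hy : ContDiff ℝ (⊤ : ℕ∞) y) (a : ℝ) (x : En n) :
    vdiv (fun z => (Real.exp (-η z) * ((y z - a) * ‖u z‖^2)) • (T z (gradient y z))) x
      = Real.exp (-η x) * ((y x - a) * (‖u x‖ ^ 2 * Lop T η y x
          + 2 * ∑ j, u x j * ⟪T x (gradient y x), gradient (fun z => u z j) x⟫)
        + ‖u x‖ ^ 2 * ⟪T x (gradient y x), gradient y x⟫) := by
  set V : En n → En n := fun z => T z (gradient y z) with hV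
  set ρ : En n → ℝ := fun z => Real.exp (-η z) * ((y z - a) * ‖u z‖^2) with hρ
  have hVc : ContDiff ℝ (⊤ : ℕ∞) V := hT.clm_apply (contDiff_gradient y hy)
  have hVd : DifferentiableAt ℝ V x := (hVc.differentiable (by simp)) x
  have hud : DifferentiableAt ℝ u x := (hu.differentiable (by simp)) x
  have hyd : DifferentiableAt ℝ y x := (hy.differentiable (by simp)) x
  have hηd : DifferentiableAt ℝ η x := (hη.differentiable (by simp)) x
  have hnsqd : DifferentiableAt ℝ (fun z => ‖u z‖^2) x :=
    ((hu.norm_sq (𝕜 := ℝ)).differentiable (by simp)) x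
  have hsubd : DifferentiableAt ℝ (fun z => y z - a) x := hyd.sub_const a
  have hψd : DifferentiableAt ℝ (fun z => (y z - a) * ‖u z‖^2) x := hsubd.mul hnsqd
  have hcd : DifferentiableAt ℝ (fun z => Real.exp (-η z)) x := hηd.neg.exp
  have hρd : DifferentiableAt ℝ ρ x := hcd.mul hψd
  -- derivative of ‖u‖² applied to a vector
  have hnsq' : ∀ w, fderiv ℝ (fun z => ‖u z‖^2) x w = 2 * ⟪u x, fderiv ℝ u x w⟫ := by
    intro w
    have he : (fun z : En n => ‖u z‖^2) = fun z => ⟪u z, u z⟫ :=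
      funext fun z => (real_inner_self_eq_norm_sq _).symm
    rw [he, fderiv_inner_apply (𝕜 := ℝ) hud hud]
    rw [real_inner_comm (fderiv ℝ u x w) (u x)]
    ring
  -- derivative of ρ applied to a vector
  have hρ' : ∀ w, fderiv ℝ ρ x w = Real.exp (-η x) *
      (((y x - a) * (2 * ⟪u x, fderiv ℝ u x w⟫) + ‖u x‖^2 * fderiv ℝ y x w)
        - (y x - a) * ‖u x‖^2 * fderiv ℝ η x w) := by
    intro w
    have h1 : fderiv ℝ ρ x = Real.exp (-η x) • fderiv ℝ (fun z => (y z - a) * ‖u z‖^2) x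
        + ((y x - a) * ‖u x‖^2) • fderiv ℝ (fun z => Real.exp (-η z)) x :=
      fderiv_mul hcd hψd
    have h2 : fderiv ℝ (fun z => (y z - a) * ‖u z‖^2) x
        = (y x - a) • fderiv ℝ (fun z => ‖u z‖^2) x + ‖u x‖^2 • fderiv ℝ (fun z => y z - a) x :=
      fderiv_mul hsubd hnsqd
    have h3 : fderiv ℝ (fun z => Real.exp (-η z)) x = Real.exp (-η x) • fderiv ℝ (fun z => -η z) x :=
      fderiv_exp hηd.neg
    have h4 : fderiv ℝ (fun z => -η z) x = -fderiv ℝ η x := fderiv_neg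
    have h5 : fderiv ℝ (fun z => y z - a) x = fderiv ℝ y x := fderiv_sub_const a
    rw [h1]
    simp only [ContinuousLinearMap.add_apply, ContinuousLinearMap.smul_apply, smul_eq_mul,
      h2, h3, h4, h5, ContinuousLinearMap.neg_apply, hnsq']
    ring
  -- expand the divergence
  have hF' : fderiv ℝ (fun z => ρ z • V z) x
      = ρ x • fderiv ℝ V x + (fderiv ℝ ρ x).smulRight (V x) := fderiv_smul hρd hVd
  have hsum : vdiv (fun z => ρ z • V z) x = ρ x * vdiv V x + fderiv ℝ ρ x (V x) := by
    unfold vdiv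
    simp only [hF', ContinuousLinearMap.add_apply, ContinuousLinearMap.smul_apply,
      ContinuousLinearMap.smulRight_apply, PiLp.add_apply, PiLp.smul_apply, smul_eq_mul]
    rw [Finset.sum_add_distrib, ← Finset.mul_sum]
    congr 1
    · conv_rhs => rw [← rep (V x)]
      rw [map_sum]
      refine Finset.sum_congr rfl fun i _ => ?_
      rw [ContinuousLinearMap.map_smul]
      simp [mul_comm]
  rw [hsum, hρ']
  -- identify all the pieces
  have e1 : fderiv ℝ η x (V x) = ⟪gradient η x, V x⟫ := (inner_grad η x (V x)).symm
  have e2 : fderiv ℝ y x (V x) = ⟪V x, gradient y x⟫ := by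
    rw [← inner_grad y x (V x), real_inner_comm]
  have e3 : ⟪u x, fderiv ℝ u x (V x)⟫
      = ∑ j, u x j * ⟪V x, gradient (fun z => u z j) x⟫ := by
    rw [PiLp.inner_apply]
    refine Finset.sum_congr rfl fun j _ => ?_
    simp only [RCLike.inner_apply, conj_trivial]
    rw [mul_comm (u x j)]
    congr 1
    rw [coord_fderiv u (hu.differentiable (by simp)) x j (V x),
      ← inner_grad (fun z => u z j) x (V x), real_inner_comm]
  have e4 : Lop T η y x = vdiv V x - ⟪gradient η x, V x⟫ := rfl
  rw [e1, e2, e3, e4, hρ]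
  ring

lemma vdiv_continuous (X : En n → En n) (hX : ContDiff ℝ (⊤ : ℕ∞) X) : Continuous (vdiv X) := by
  have h1 : Continuous (fderiv ℝ X) := hX.continuous_fderiv (by simp)
  refine continuous_finset_sum _ fun i _ => ?_
  exact (EuclideanSpace.proj i).continuous.comp (h1.clm_apply continuous_const)

lemma fderiv_F_frontier (η : En n → ℝ) (hη : ContDiff ℝ (⊤ : ℕ∞) η)
    (T : En n → (En n →L[ℝ] En n)) (hT : ContDiff ℝ (⊤ : ℕ∞) T)
    (u : En n → En n) (hu : ContDiff ℝ (⊤ : ℕ∞) u)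
    (y : En n → ℝ) (hy : ContDiff ℝ (⊤ : ℕ∞) y) (a : ℝ) (x : En n) (hux : u x = 0) :
    fderiv ℝ (fun z => (Real.exp (-η z) * ((y z - a) * ‖u z‖^2)) • (T z (gradient y z))) x = 0 := by
  set V : En n → En n := fun z => T z (gradient y z) with hV
  set ρ : En n → ℝ := fun z => Real.exp (-η z) * ((y z - a) * ‖u z‖^2) with hρ
  have hVc : ContDiff ℝ (⊤ : ℕ∞) V := hT.clm_apply (contDiff_gradient y hy)
  have hVd : DifferentiableAt ℝ V x := (hVc.differentiable (by simp)) x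
  have hud : DifferentiableAt ℝ u x := (hu.differentiable (by simp)) x
  have hyd : DifferentiableAt ℝ y x := (hy.differentiable (by simp)) x
  have hηd : DifferentiableAt ℝ η x := (hη.differentiable (by simp)) x
  have hnsqd : DifferentiableAt ℝ (fun z => ‖u z‖^2) x :=
    ((hu.norm_sq (𝕜 := ℝ)).differentiable (by simp)) x
  have hsubd : DifferentiableAt ℝ (fun z => y z - a) x := hyd.sub_const a
  have hψd : DifferentiableAt ℝ (fun z => (y z - a) * ‖u z‖^2) x := hsubd.mul hnsqd
  have hcd : DifferentiableAt ℝ (fun z => Real.exp (-η z)) x := hηd.neg.exp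
  have hρd : DifferentiableAt ℝ ρ x := hcd.mul hψd
  have hnsq' : ∀ w, fderiv ℝ (fun z => ‖u z‖^2) x w = 2 * ⟪u x, fderiv ℝ u x w⟫ := by
    intro w
    have he : (fun z : En n => ‖u z‖^2) = fun z => ⟪u z, u z⟫ :=
      funext fun z => (real_inner_self_eq_norm_sq _).symm
    rw [he, fderiv_inner_apply (𝕜 := ℝ) hud hud]
    rw [real_inner_comm (fderiv ℝ u x w) (u x)]
    ring
  have hρ'0 : fderiv ℝ ρ x = 0 := by
    have h1 : fderiv ℝ ρ x = Real.exp (-η x) • fderiv ℝ (fun z => (y z - a) * ‖u z‖^2) x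
        + ((y x - a) * ‖u x‖^2) • fderiv ℝ (fun z => Real.exp (-η z)) x :=
      fderiv_mul hcd hψd
    have h2 : fderiv ℝ (fun z => (y z - a) * ‖u z‖^2) x
        = (y x - a) • fderiv ℝ (fun z => ‖u z‖^2) x + ‖u x‖^2 • fderiv ℝ (fun z => y z - a) x :=
      fderiv_mul hsubd hnsqd
    ext w
    rw [h1]
    simp only [ContinuousLinearMap.add_apply, ContinuousLinearMap.smul_apply, smul_eq_mul,
      h2, hnsq', hux, ContinuousLinearMap.zero_apply]
    simp [hux]
  have hρx : ρ x = 0 := by simp [hρ, hux]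
  show fderiv ℝ (fun z => ρ z • V z) x = 0
  have hsm : fderiv ℝ (fun z => ρ z • V z) x
      = ρ x • fderiv ℝ V x + (fderiv ℝ ρ x).smulRight (V x) := fderiv_smul hρd hVd
  rw [hsm, hρx, hρ'0]
  ext w
  simp

end Aux

/-- Identity used in the proof of Theorem 1.2:
`−∫ (y − a)(|u|² 𝓛y + 2⟨u, T(∇y, ∇u)⟩) dm = ∫ |u|² ⟨T(∇y), ∇y⟩ dm`
for `u` vanishing on `∂Ω`. -/
theorem integral_identity_coordinate_function
    (n : ℕ) (hn : 1 ≤ n)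
    (Ω : Set (En n)) (hΩopen : IsOpen Ω) (hΩbd : Bornology.IsBounded Ω)
    (hΩconn : IsConnected Ω)
    (η : En n → ℝ) (hη : ContDiff ℝ (⊤ : ℕ∞) η)
    (T : En n → (En n →L[ℝ] En n)) (hT : ContDiff ℝ (⊤ : ℕ∞) T)
    (hTsym : ∀ x v w, ⟪T x v, w⟫ = ⟪v, T x w⟫)
    (hTpos : ∀ x v, v ≠ 0 → 0 < ⟪T x v, v⟫)
    (u : En n → En n) (hu : ContDiff ℝ (⊤ : ℕ∞) u)
    (hbd : ∀ x ∈ frontier Ω, u x = 0)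
    (y : En n → ℝ) (hy : ContDiff ℝ (⊤ : ℕ∞) y) (a : ℝ) :
    -(∫ x, (y x - a) * (‖u x‖ ^ 2 * Lop T η y x
        + 2 * ∑ j, u x j * ⟪T x (gradient y x), gradient (fun z => u z j) x⟫)
        ∂(wMeasure η Ω))
      = ∫ x, ‖u x‖ ^ 2 * ⟪T x (gradient y x), gradient y x⟫ ∂(wMeasure η Ω) := by
  classical
  set V : En n → En n := fun z => T z (gradient y z) with hV
  set F : En n → En n :=
    fun z => (Real.exp (-η z) * ((y z - a) * ‖u z‖^2)) • (T z (gradient y z)) with hF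
  have hVc : ContDiff ℝ (⊤ : ℕ∞) V := hT.clm_apply (contDiff_gradient y hy)
  have hρc : ContDiff ℝ (⊤ : ℕ∞) (fun z => Real.exp (-η z) * ((y z - a) * ‖u z‖^2)) :=
    (Real.contDiff_exp.comp hη.neg).mul ((hy.sub contDiff_const).mul (hu.norm_sq (𝕜 := ℝ)))
  have hFc : ContDiff ℝ (⊤ : ℕ∞) F := hρc.smul hVc
  have hF0 : ∀ x ∈ frontier Ω, F x = 0 := by
    intro x hx
    simp [hF, hbd x hx]
  have hF'0 : ∀ x ∈ frontier Ω, fderiv ℝ F x = 0 := fun x hx =>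
    fderiv_F_frontier η hη T hT u hu y hy a x (hbd x hx)
  have hdiv0 : ∫ x in Ω, vdiv F x = 0 :=
    integral_vdiv_zero hn Ω hΩopen hΩbd F hFc hF0 hF'0
  -- the two integrands
  set g₁ : En n → ℝ := fun x => (y x - a) * (‖u x‖ ^ 2 * Lop T η y x
      + 2 * ∑ j, u x j * ⟪T x (gradient y x), gradient (fun z => u z j) x⟫) with hg₁
  set g₂ : En n → ℝ := fun x => ‖u x‖ ^ 2 * ⟪T x (gradient y x), gradient y x⟫ with hg₂
  -- continuity
  have hgradη : Continuous (fun x => gradient η x) := (contDiff_gradient η hη).continuous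
  have hgrady : Continuous (fun x => gradient y x) := (contDiff_gradient y hy).continuous
  have hLop : Continuous (Lop T η y) := by
    have h1 : Continuous (vdiv V) := vdiv_continuous V hVc
    have h2 : Continuous (fun x => ⟪gradient η x, V x⟫) := hgradη.inner hVc.continuous
    exact h1.sub h2
  have hgraduj : ∀ j, Continuous (fun x => gradient (fun z => u z j) x) := by
    intro j
    have : ContDiff ℝ (⊤ : ℕ∞) (fun z => u z j) := (EuclideanSpace.proj (𝕜 := ℝ) j).contDiff.comp hu
    exact (contDiff_gradient _ this).continuous
  have hg₁c : Continuous g₁ := by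
    refine ((hy.continuous.sub continuous_const).mul ?_)
    refine (((hu.norm_sq (𝕜 := ℝ)).continuous).mul hLop).add ?_
    refine continuous_const.mul (continuous_finset_sum _ fun j _ => ?_)
    exact ((EuclideanSpace.proj (𝕜 := ℝ) j).continuous.comp hu.continuous).mul
      (hVc.continuous.inner (hgraduj j))
  have hg₂c : Continuous g₂ :=
    ((hu.norm_sq (𝕜 := ℝ)).continuous).mul (hVc.continuous.inner hgrady)
  -- integrability with respect to the weighted measure
  have hcomp : IsCompact (closure Ω) :=
    Metric.isCompact_of_isClosed_isBounded isClosed_closure hΩbd.closure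
  have hint : ∀ g : En n → ℝ, Continuous g → Integrable g (wMeasure η Ω) := by
    intro g hg
    rw [wMeasure]
    have hd : Measurable fun x => ENNReal.ofReal (Real.exp (-η x)) :=
      (hη.continuous.neg.rexp.measurable).ennreal_ofReal
    rw [integrable_withDensity_iff hd (Filter.Eventually.of_forall fun x => ENNReal.ofReal_lt_top)]
    have hcont : Continuous fun x => g x * (ENNReal.ofReal (Real.exp (-η x))).toReal := by
      have : (fun x => (ENNReal.ofReal (Real.exp (-η x))).toReal)
          = fun x => Real.exp (-η x) := by
        funext x
        rw [ENNReal.toReal_ofReal (Real.exp_pos _).le]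
      rw [show (fun x => g x * (ENNReal.ofReal (Real.exp (-η x))).toReal)
          = fun x => g x * Real.exp (-η x) by
        funext x; rw [ENNReal.toReal_ofReal (Real.exp_pos _).le]]
      exact hg.mul (hη.continuous.neg.rexp)
    exact (hcont.continuousOn.integrableOn_compact hcomp).mono_set subset_closure
  have hintg₁ : Integrable g₁ (wMeasure η Ω) := hint g₁ hg₁c
  have hintg₂ : Integrable g₂ (wMeasure η Ω) := hint g₂ hg₂c
  -- the sum integrates to zero
  have hsum0 : ∫ x, (g₁ x + g₂ x) ∂(wMeasure η Ω) = 0 := by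
    have hmeq : ∫ x, (g₁ x + g₂ x) ∂(wMeasure η Ω)
        = ∫ x in Ω, Real.exp (-η x) * (g₁ x + g₂ x) ∂volume := by
      rw [wMeasure]
      have hdeq : (fun x => ENNReal.ofReal (Real.exp (-η x)))
          = fun x => ((Real.toNNReal (Real.exp (-η x)) : NNReal) : ENNReal) := rfl
      rw [hdeq, integral_withDensity_eq_integral_smul
        (show Measurable fun x => Real.toNNReal (Real.exp (-η x)) from
          hη.continuous.neg.rexp.measurable.real_toNNReal) _]
      refine setIntegral_congr_fun hΩopen.measurableSet fun x _ => ?_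
      rw [NNReal.smul_def, Real.coe_toNNReal _ (Real.exp_pos _).le, smul_eq_mul]
    rw [hmeq, ← hdiv0]
    refine setIntegral_congr_fun hΩopen.measurableSet fun x _ => ?_
    simp only [hg₁, hg₂]
    rw [hF, vdiv_key η hη T hT u hu y hy a x]
  rw [integral_add hintg₁ hintg₂] at hsum0
  have h1 : ∫ x, g₁ x ∂(wMeasure η Ω) = ∫ x, (y x - a) * (‖u x‖ ^ 2 * Lop T η y x
      + 2 * ∑ j, u x j * ⟪T x (gradient y x), gradient (fun z => u z j) x⟫)
      ∂(wMeasure η Ω) := rfl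
  have h2 : ∫ x, g₂ x ∂(wMeasure η Ω)
      = ∫ x, ‖u x‖ ^ 2 * ⟪T x (gradient y x), gradient y x⟫ ∂(wMeasure η Ω) := rfl
  rw [← h1, ← h2]
  have h3 : integral (wMeasure η Ω) g₁ = ∫ x, g₁ x ∂(wMeasure η Ω) := rfl
  have h4 : integral (wMeasure η Ω) g₂ = ∫ x, g₂ x ∂(wMeasure η Ω) := rfl
  rw [h3, h4]
  linarith


end
end
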